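/- For every δ ∈ (0, 2π/3], ρ ≥ 1 and γ ≥ 1 there exists a constant C = C(δ, ρ, γ) > 0 such that every δ-fat mesh M with n vertices all of whose edges have length in [1, ρ] has at most C · n distinct γ-fat convex outerplanar polygons (carrots) that respect M. -/

import Mathlib

/-!
A `γ`-fat carrot `P` lies in a disk of radius `r₁ ≤ γ r₂`, where `r₂` is the radius of a disk
`D ⊆ P`. Since `P` has no mesh vertex in its interior, `r₂ ≤ ρ`: the centre of `D` lies in a
triangle of `P` whose vertices are within `ρ` of it. So `P` lies in the disk of radius `2γρ`
about any of its vertices. A `δ`-fat triangle with edges at least `1` has area at least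
`sin δ / 2`, and the triangles have disjoint interiors, so such a disk contains at most
`K = K(δ, γ, ρ)` triangles. A carrot is the union of the triangles it contains, so at most `2^K`
carrots are attached to each vertex, and there are at most `2^K · n` in all.
-/

open scoped RealInnerProductSpace
open EuclideanGeometry

noncomputable section

/-- The Euclidean plane. -/
abbrev Pt : Type := EuclideanSpace ℝ (Fin 2)

/-- A (possibly degenerate) triangle, given by its three corners. -/
structure Tri where
  a : Pt
  b : Pt
  c : Pt

/-- The vertex set of a triangle. -/
def Tri.verts (T : Tri) : Set Pt := {T.a, T.b, T.c}

/-- The closed triangle (as a region of the plane). -/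
def Tri.carrier (T : Tri) : Set Pt := convexHull ℝ T.verts

/-- The three edges of a triangle, each as a closed segment. -/
def Tri.edgeSegs (T : Tri) : Set (Set Pt) :=
  {segment ℝ T.a T.b, segment ℝ T.b T.c, segment ℝ T.a T.c}

/-- Nondegeneracy: the three corners are not collinear. -/
def Tri.Nondeg (T : Tri) : Prop := ¬ Collinear ℝ T.verts

/-- A mesh: a finite nonempty set of nondegenerate triangles in the plane such that any two
distinct triangles have disjoint interiors and intersect in either the empty set, a common
vertex, or a complete common edge. -/
structure Mesh where
  tris : Set Tri
  finite : tris.Finite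
  nonempty : tris.Nonempty
  nondeg : ∀ T ∈ tris, T.Nondeg
  proper : ∀ T ∈ tris, ∀ T' ∈ tris, T ≠ T' →
    interior T.carrier ∩ interior T'.carrier = ∅ ∧
    (T.carrier ∩ T'.carrier = ∅ ∨
      (∃ v ∈ T.verts ∩ T'.verts, T.carrier ∩ T'.carrier = {v}) ∨
      (∃ e ∈ T.edgeSegs ∩ T'.edgeSegs, T.carrier ∩ T'.carrier = e))

/-- The vertices of a mesh. -/
def Mesh.verts (M : Mesh) : Set Pt := ⋃ T ∈ M.tris, T.verts

/-- The edges of a mesh, as unordered pairs of vertices. -/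
def Mesh.edges (M : Mesh) : Set (Sym2 Pt) :=
  ⋃ T ∈ M.tris, ({s(T.a, T.b), s(T.b, T.c), s(T.a, T.c)} : Set (Sym2 Pt))

/-- A triangle is `δ`-fat if each of its interior angles is at least `δ`. -/
def Tri.Fat (δ : ℝ) (T : Tri) : Prop :=
  δ ≤ ∠ T.b T.a T.c ∧ δ ≤ ∠ T.a T.b T.c ∧ δ ≤ ∠ T.a T.c T.b

/-- A mesh is `δ`-fat if every angle of every triangle is at least `δ`. -/
def Mesh.Fat (δ : ℝ) (M : Mesh) : Prop := ∀ T ∈ M.tris, T.Fat δ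

/-- A convex polygon respecting the mesh `M` (a "potato"): the union of a nonempty subset of
the triangles of `M` which is a convex set. -/
def Mesh.IsPotato (M : Mesh) (P : Set Pt) : Prop :=
  ∃ S, S ⊆ M.tris ∧ S.Nonempty ∧ P = ⋃ T ∈ S, T.carrier ∧ Convex ℝ P

/-- A convex outerplanar polygon respecting the mesh `M` (a "carrot"): a potato that contains
no vertex of `M` in its interior. -/
def Mesh.IsCarrot (M : Mesh) (P : Set Pt) : Prop :=
  M.IsPotato P ∧ ∀ v ∈ M.verts, v ∉ interior P

/-- Every edge of the mesh has length in the interval `[1, ρ]` (compactness, normalized so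
that the shortest edge has length at least `1`). -/
def Mesh.EdgesIn (M : Mesh) (ρ : ℝ) : Prop :=
  ∀ T ∈ M.tris, dist T.a T.b ∈ Set.Icc 1 ρ ∧ dist T.b T.c ∈ Set.Icc 1 ρ ∧
    dist T.a T.c ∈ Set.Icc 1 ρ

/-- A set `P` is `γ`-fat if the radius of some closed disk containing `P` (hence of the
smallest such disk) is at most `γ` times the radius of some closed disk contained in `P`. -/
def GammaFat (γ : ℝ) (P : Set Pt) : Prop :=
  ∃ c₁ r₁ c₂ r₂ : _, P ⊆ Metric.closedBall c₁ r₁ ∧ Metric.closedBall c₂ r₂ ⊆ P ∧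
    0 ≤ r₂ ∧ r₁ ≤ γ * r₂

open Metric MeasureTheory
open scoped Pointwise

lemma Real.sin_le_sin_of_le_of_le_pi_sub {δ θ : ℝ} (hδ : 0 ≤ δ) (hδθ : δ ≤ θ)
    (hθ : θ ≤ Real.pi - δ) : Real.sin δ ≤ Real.sin θ := by
  rcases le_or_gt θ (Real.pi / 2) with h | h
  · exact Real.sin_le_sin_of_le_of_le_pi_div_two (by linarith [Real.pi_pos]) h hδθ
  · rw [← Real.sin_pi_sub θ]
    exact Real.sin_le_sin_of_le_of_le_pi_div_two (by linarith [Real.pi_pos]) (by linarith)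
      (by linarith)

theorem Finset.card_mul_le_measure_of_pairwiseDisjoint {α ι : Type*} [MeasurableSpace α]
    (μ : Measure α) {s : Finset ι} {f : ι → Set α} {B : Set α} {a : ENNReal}
    (hdisj : (s : Set ι).PairwiseDisjoint f) (hmeas : ∀ i ∈ s, MeasurableSet (f i))
    (ha : ∀ i ∈ s, a ≤ μ (f i)) (hB : ∀ i ∈ s, f i ⊆ B) : s.card * a ≤ μ B :=
  calc s.card * a = ∑ _i ∈ s, a := by rw [Finset.sum_const, nsmul_eq_mul]
    _ ≤ ∑ i ∈ s, μ (f i) := Finset.sum_le_sum ha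
    _ = μ (⋃ i ∈ s, f i) := (measure_biUnion_finset hdisj hmeas).symm
    _ ≤ μ B := measure_mono (Set.iUnion₂_subset hB)

def stdTriangle : Set Pt :=
  convexHull ℝ {0, EuclideanSpace.single 0 1, EuclideanSpace.single 1 1}

lemma volume_stdTriangle_pos : 0 < volume stdTriangle := by
  have hspan : affineSpan ℝ
      ({0, EuclideanSpace.single 0 1, EuclideanSpace.single 1 1} : Set Pt) = ⊤ := by
    rw [AffineSubspace.affineSpan_eq_top_iff_vectorSpan_eq_top_of_nonempty ℝ _ _
        (Set.insert_nonempty _ _), vectorSpan_eq_span_vsub_set_right ℝ (Set.mem_insert 0 _),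
      eq_top_iff, ← (EuclideanSpace.basisFun (Fin 2) ℝ).toBasis.span_eq]
    refine Submodule.span_mono ?_
    rintro _ ⟨i, rfl⟩
    fin_cases i <;> simp
  exact (isOpen_interior.measure_pos volume
    (interior_convexHull_nonempty_iff_affineSpan_eq_top.mpr hspan)).trans_le
    (measure_mono interior_subset)

lemma volume_stdTriangle_ne_top : volume stdTriangle ≠ ⊤ :=
  ((Set.toFinite _).isCompact_convexHull ℝ).measure_lt_top.ne

def cross (u v : Pt) : ℝ := u 0 * v 1 - v 0 * u 1

lemma abs_cross_eq_sin_angle_mul_norm_mul_norm (u v : Pt) :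
    |cross u v| = Real.sin (InnerProductGeometry.angle u v) * (‖u‖ * ‖v‖) := by
  rw [InnerProductGeometry.sin_angle_mul_norm_mul_norm, ← Real.sqrt_sq_eq_abs]
  congr 1
  simp only [cross, PiLp.inner_apply, Fin.sum_univ_two, RCLike.inner_apply, conj_trivial]
  ring

def columnsMap (u v : Pt) : Pt →ₗ[ℝ] Pt := Matrix.toLpLin 2 2 !![u 0, v 0; u 1, v 1]

lemma det_columnsMap (u v : Pt) : LinearMap.det (columnsMap u v) = cross u v := by
  rw [columnsMap, LinearMap.det_toLpLin, Matrix.det_fin_two_of, cross]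

lemma columnsMap_single_zero (u v : Pt) : columnsMap u v (EuclideanSpace.single 0 1) = u := by
  ext i; fin_cases i <;> simp [columnsMap, Matrix.toLpLin_apply]

lemma columnsMap_single_one (u v : Pt) : columnsMap u v (EuclideanSpace.single 1 1) = v := by
  ext i; fin_cases i <;> simp [columnsMap, Matrix.toLpLin_apply]

lemma image_columnsMap_stdTriangle (u v : Pt) :
    columnsMap u v '' stdTriangle = convexHull ℝ {0, u, v} := by
  rw [stdTriangle, LinearMap.image_convexHull, Set.image_insert_eq, Set.image_insert_eq,
    Set.image_singleton, map_zero, columnsMap_single_zero, columnsMap_single_one]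

lemma volume_convexHull_triple (a b c : Pt) :
    volume (convexHull ℝ {a, b, c}) =
      ENNReal.ofReal |cross (b - a) (c - a)| * volume stdTriangle := by
  have htranslate : ({a, b, c} : Set Pt) = a +ᵥ ({0, b - a, c - a} : Set Pt) := by
    simp [Set.vadd_set_insert]
  rw [htranslate, convexHull_vadd, measure_vadd, ← image_columnsMap_stdTriangle,
    Measure.addHaar_image_linearMap, det_columnsMap]

namespace Tri

variable {T : Tri} {δ ρ : ℝ}

lemma volume_carrier :
    volume T.carrier = ENNReal.ofReal
      (Real.sin (∠ T.b T.a T.c) * (dist T.a T.b * dist T.a T.c)) * volume stdTriangle := by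
  rw [carrier, verts, volume_convexHull_triple, abs_cross_eq_sin_angle_mul_norm_mul_norm,
    dist_comm T.a, dist_comm T.a, dist_eq_norm, dist_eq_norm]
  rfl

lemma volume_interior_carrier : volume (interior T.carrier) = volume T.carrier :=
  measure_interior_of_null_frontier ((convex_convexHull ℝ _).addHaar_frontier volume)

lemma angle_bac_le_pi_sub (hδ : 0 ≤ δ) (hfat : T.Fat δ) (hab : T.a ≠ T.b) :
    ∠ T.b T.a T.c ≤ Real.pi - δ := by
  have hsum := angle_add_angle_add_angle_eq_pi T.c hab.symm
  rw [angle_comm T.b T.c, angle_comm T.c] at hsum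
  linarith [hfat.2.1, hfat.2.2, angle_nonneg T.a T.c T.b]

lemma sin_mul_volume_stdTriangle_le_volume_carrier (hδ : 0 ≤ δ) (hfat : T.Fat δ)
    (hab : 1 ≤ dist T.a T.b) (hac : 1 ≤ dist T.a T.c) :
    ENNReal.ofReal (Real.sin δ) * volume stdTriangle ≤ volume T.carrier := by
  have hsin : Real.sin δ ≤ Real.sin (∠ T.b T.a T.c) :=
    Real.sin_le_sin_of_le_of_le_pi_sub hδ hfat.1
      (angle_bac_le_pi_sub hδ hfat (dist_pos.mp (one_pos.trans_le hab)))
  have hsin_nonneg : 0 ≤ Real.sin (∠ T.b T.a T.c) :=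
    Real.sin_nonneg_of_nonneg_of_le_pi (angle_nonneg _ _ _) (angle_le_pi _ _ _)
  rw [volume_carrier]
  gcongr
  calc Real.sin δ ≤ Real.sin (∠ T.b T.a T.c) * (1 * 1) := by rwa [mul_one, mul_one]
    _ ≤ _ := by gcongr

lemma carrier_subset_closedBall (hab : dist T.a T.b ≤ ρ) (hac : dist T.a T.c ≤ ρ) :
    T.carrier ⊆ closedBall T.a ρ := by
  refine convexHull_min ?_ (convex_closedBall _ _)
  rintro x (rfl | rfl | rfl)
  · exact mem_closedBall_self (dist_nonneg.trans hab)
  · rwa [mem_closedBall, dist_comm]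
  · rwa [mem_closedBall, dist_comm]

end Tri

lemma GammaFat.subset_closedBall {γ ρ : ℝ} {P : Set Pt} {p : Pt} (hP : GammaFat γ P)
    (hγ : 0 ≤ γ) (hinradius : ∀ c r, closedBall c r ⊆ P → 0 ≤ r → r ≤ ρ) (hp : p ∈ P) :
    P ⊆ closedBall p (2 * γ * ρ) := by
  obtain ⟨c₁, r₁, c₂, r₂, hP₁, hP₂, hr₂, hr₁⟩ := hP
  have hr₁ρ : r₁ ≤ γ * ρ := hr₁.trans (mul_le_mul_of_nonneg_left (hinradius c₂ r₂ hP₂ hr₂) hγ)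
  intro x hx
  have hxc := mem_closedBall.mp (hP₁ hx)
  have hpc := mem_closedBall.mp (hP₁ hp)
  rw [mem_closedBall]
  linarith [dist_triangle_right x p c₁]

namespace Mesh

variable (M : Mesh) {δ ρ γ : ℝ} {P : Set Pt}

def trisIn (B : Set Pt) : Set Tri := {T ∈ M.tris | T.carrier ⊆ B}

lemma finite_trisIn (B : Set Pt) : (M.trisIn B).Finite :=
  M.finite.subset (Set.sep_subset _ _)

lemma finite_verts : M.verts.Finite :=
  M.finite.biUnion fun T _ => ((Set.finite_singleton T.c).insert T.b).insert T.a

lemma mem_verts {T : Tri} (hT : T ∈ M.tris) : T.a ∈ M.verts :=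
  Set.mem_biUnion hT (Set.mem_insert _ _)

/-- How many disjoint triangles of area at least `sin δ · |stdTriangle|` fit in a disk of
radius `R`. -/
def packingBound (δ R : ℝ) : ℕ :=
  ⌈(volume (closedBall (0 : Pt) R)).toReal / (Real.sin δ * (volume stdTriangle).toReal)⌉₊

lemma ncard_trisIn_mul_le_volume (hδ : 0 ≤ δ) (hfat : M.Fat δ) (hedge : M.EdgesIn ρ)
    (B : Set Pt) :
    ((M.trisIn B).ncard : ENNReal) * (ENNReal.ofReal (Real.sin δ) * volume stdTriangle) ≤
      volume B := by
  have hfin := M.finite_trisIn B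
  have hmem {T : Tri} (hT : T ∈ hfin.toFinset) : T ∈ M.trisIn B := hfin.mem_toFinset.mp hT
  rw [Set.ncard_eq_toFinset_card _ hfin]
  refine Finset.card_mul_le_measure_of_pairwiseDisjoint volume
    (f := fun T => interior T.carrier) ?_ (fun _ _ => isOpen_interior.measurableSet) ?_
    (fun T hT => interior_subset.trans (hmem hT).2)
  · intro T hT T' hT' hne
    exact Set.disjoint_iff_inter_eq_empty.mpr (M.proper T (hmem hT).1 T' (hmem hT').1 hne).1
  · intro T hT
    obtain ⟨hab, -, hac⟩ := hedge T (hmem hT).1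
    rw [Tri.volume_interior_carrier]
    exact Tri.sin_mul_volume_stdTriangle_le_volume_carrier hδ (hfat T (hmem hT).1) hab.1 hac.1

lemma ncard_trisIn_closedBall_le (hδ : δ ∈ Set.Ioo 0 Real.pi) (hfat : M.Fat δ)
    (hedge : M.EdgesIn ρ) (v : Pt) (R : ℝ) :
    (M.trisIn (closedBall v R)).ncard ≤ packingBound δ R := by
  have hsin : 0 < Real.sin δ := Real.sin_pos_of_pos_of_lt_pi hδ.1 hδ.2
  have ha : 0 < Real.sin δ * (volume stdTriangle).toReal :=
    mul_pos hsin (ENNReal.toReal_pos volume_stdTriangle_pos.ne' volume_stdTriangle_ne_top)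
  have hpack := M.ncard_trisIn_mul_le_volume hδ.1.le hfat hedge (closedBall v R)
  rw [Measure.addHaar_closedBall_center, ← ENNReal.ofReal_toReal volume_stdTriangle_ne_top,
    ← ENNReal.ofReal_mul hsin.le, ← ENNReal.ofReal_natCast, ← ENNReal.ofReal_mul (by positivity),
    ENNReal.ofReal_le_iff_le_toReal measure_closedBall_lt_top.ne] at hpack
  exact Nat.cast_le.mp (((le_div_iff₀ ha).mpr hpack).trans (Nat.le_ceil _))

lemma IsPotato.eq_biUnion_trisIn (hP : M.IsPotato P) : P = ⋃ T ∈ M.trisIn P, T.carrier := by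
  obtain ⟨S, hS, -, rfl, -⟩ := hP
  refine (Set.iUnion₂_subset fun T hT => ?_).antisymm (Set.iUnion₂_subset fun T hT => hT.2)
  have hTP : T.carrier ⊆ ⋃ T ∈ S, T.carrier := Set.subset_biUnion_of_mem (u := Tri.carrier) hT
  exact Set.subset_biUnion_of_mem (u := Tri.carrier) (show T ∈ M.trisIn _ from ⟨hS hT, hTP⟩)

lemma ncard_potatoes_subset_le (B : Set Pt) :
    {P | M.IsPotato P ∧ P ⊆ B}.ncard ≤ 2 ^ (M.trisIn B).ncard := by
  rw [← Set.ncard_powerset _ (M.finite_trisIn B)]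
  refine Set.ncard_le_ncard_of_injOn M.trisIn ?_ ?_ (M.finite_trisIn B).powerset
  · exact fun P hP T hT => ⟨hT.1, hT.2.trans hP.2⟩
  · intro P hP Q hQ hPQ
    rw [hP.1.eq_biUnion_trisIn, hQ.1.eq_biUnion_trisIn, hPQ]

lemma finite_potatoes : {P | M.IsPotato P}.Finite :=
  (M.finite.powerset.image fun S => ⋃ T ∈ S, T.carrier).subset
    fun _ ⟨S, hS, _, hPS, _⟩ => ⟨S, hS, hPS.symm⟩

section

variable {M}

lemma IsCarrot.radius_le (hP : M.IsCarrot P) (hedge : M.EdgesIn ρ) {c : Pt} {r : ℝ}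
    (hc : closedBall c r ⊆ P) (hr : 0 ≤ r) : r ≤ ρ := by
  by_contra! hρr
  obtain ⟨⟨S, hS, -, rfl, -⟩, hvert⟩ := hP
  obtain ⟨T, hT, hcT⟩ := Set.mem_iUnion₂.mp (hc (mem_closedBall_self hr))
  obtain ⟨hab, -, hac⟩ := hedge T (hS hT)
  have hcT : dist c T.a ≤ ρ := Tri.carrier_subset_closedBall hab.2 hac.2 hcT
  have hTa : T.a ∈ ball c r := mem_ball'.mpr (by linarith)
  exact hvert T.a (M.mem_verts (hS hT)) (interior_mono hc (ball_subset_interior_closedBall hTa))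

lemma IsCarrot.exists_subset_closedBall (hP : M.IsCarrot P) (hfatP : GammaFat γ P)
    (hγ : 0 ≤ γ) (hedge : M.EdgesIn ρ) : ∃ v ∈ M.verts, P ⊆ closedBall v (2 * γ * ρ) := by
  obtain ⟨S, hS, ⟨T, hT⟩, hPS, -⟩ := hP.1
  refine ⟨T.a, M.mem_verts (hS hT), hfatP.subset_closedBall hγ
    (fun c r hc hr => hP.radius_le hedge hc hr) ?_⟩
  rw [hPS]
  exact Set.mem_biUnion hT (subset_convexHull ℝ _ (Set.mem_insert _ _))

end

lemma ncard_fatCarrots_le (hδ : δ ∈ Set.Ioo 0 Real.pi) (hγ : 0 ≤ γ) (hfat : M.Fat δ)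
    (hedge : M.EdgesIn ρ) :
    {P | M.IsCarrot P ∧ GammaFat γ P}.ncard ≤
      2 ^ packingBound δ (2 * γ * ρ) * M.verts.ncard := by
  set R := 2 * γ * ρ
  set V := M.finite_verts.toFinset
  have hcover : {P | M.IsCarrot P ∧ GammaFat γ P} ⊆
      ⋃ v ∈ V, {P | M.IsPotato P ∧ P ⊆ closedBall v R} := by
    rintro P ⟨hP, hfatP⟩
    obtain ⟨v, hv, hPv⟩ := hP.exists_subset_closedBall hfatP hγ hedge
    exact Set.mem_biUnion (M.finite_verts.mem_toFinset.mpr hv) ⟨hP.1, hPv⟩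
  calc _ ≤ (⋃ v ∈ V, {P | M.IsPotato P ∧ P ⊆ closedBall v R}).ncard :=
        Set.ncard_le_ncard hcover
          (M.finite_potatoes.subset (Set.iUnion₂_subset fun _ _ _ hP => hP.1))
    _ ≤ ∑ v ∈ V, {P | M.IsPotato P ∧ P ⊆ closedBall v R}.ncard :=
        Finset.set_ncard_biUnion_le _ _
    _ ≤ ∑ _v ∈ V, 2 ^ packingBound δ R :=
        Finset.sum_le_sum fun v _ => (M.ncard_potatoes_subset_le _).trans
          (Nat.pow_le_pow_right two_pos (M.ncard_trisIn_closedBall_le hδ hfat hedge v R))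
    _ = 2 ^ packingBound δ R * M.verts.ncard := by
        rw [Finset.sum_const, smul_eq_mul, mul_comm, Set.ncard_eq_toFinset_card _ M.finite_verts]

end Mesh

theorem fat_carrots_linear_bound_general (δ : ℝ) (hδ : δ ∈ Set.Ioc 0 (2 * Real.pi / 3))
    (ρ : ℝ) (γ : ℝ) (hγ : 1 ≤ γ) :
    ∃ C : ℝ, 0 < C ∧ ∀ M : Mesh, M.Fat δ → M.EdgesIn ρ →
      ({P : Set Pt | M.IsCarrot P ∧ GammaFat γ P}.ncard : ℝ) ≤ C * M.verts.ncard := by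
  have hδπ : δ ∈ Set.Ioo 0 Real.pi := ⟨hδ.1, hδ.2.trans_lt (by linarith [Real.pi_pos])⟩
  refine ⟨2 ^ Mesh.packingBound δ (2 * γ * ρ), by positivity, fun M hfat hedge => ?_⟩
  exact_mod_cast M.ncard_fatCarrots_le hδπ (by linarith) hfat hedge

/-- For every `δ ∈ (0, 2π/3]`, `ρ ≥ 1` and `γ ≥ 1` there is `C > 0` such that
every `δ`-fat mesh with `n` vertices and all edge lengths in `[1, ρ]` has at most `C · n`
distinct `γ`-fat carrots respecting it. -/
theorem fat_carrots_linear_bound (δ : ℝ) (hδ : δ ∈ Set.Ioc 0 (2 * Real.pi / 3))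
    (ρ : ℝ) (hρ : 1 ≤ ρ) (γ : ℝ) (hγ : 1 ≤ γ) :
    ∃ C : ℝ, 0 < C ∧ ∀ M : Mesh, M.Fat δ → M.EdgesIn ρ →
      ({P : Set Pt | M.IsCarrot P ∧ GammaFat γ P}.ncard : ℝ) ≤ C * M.verts.ncard :=
  fat_carrots_linear_bound_general δ hδ ρ γ hγ
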